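/- Let Q₀, …, Qₙ ∈ ℝ[x,y] be a reflexive polynomial vector and let H be a real symmetric centrosymmetric positive definite matrix of size (n+1)×(n+1). Define Pₖ = Σ_{j=0}^{n} ((H^{1/2})⁻¹)_{kj} Qⱼ for k = 0, …, n, where H^{1/2} is the unique symmetric positive semidefinite square root of H. Then P₀, …, Pₙ is a reflexive polynomial vector, i.e., σ(Pₖ) = P_{n−k} for all k. -/

import Mathlib

/-!
Centrosymmetry of `H` says that `H` is invariant under conjugation by the reversal permutation.
That conjugation preserves positive semidefiniteness and squares, so by uniqueness of positive
square roots `H^{1/2}`, and hence its inverse, are centrosymmetric too; and a centrosymmetric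
matrix maps reflexive vectors to reflexive vectors, since `σ` is linear.
-/

open Matrix MvPolynomial

/-- The ℝ-algebra automorphism of `ℝ[x,y]` interchanging the two variables. -/
noncomputable def swapVars : MvPolynomial (Fin 2) ℝ →ₐ[ℝ] MvPolynomial (Fin 2) ℝ :=
  MvPolynomial.rename ⇑(Equiv.swap (0 : Fin 2) 1)

open scoped ComplexOrder in
/-- The positive semidefinite square root, as `Matrix.PosSemidef.sqrt` was defined in the older
Mathlib (it has since been removed). -/
noncomputable def Matrix.PosSemidef.sqrt {n 𝕜 : Type*} [Fintype n] [DecidableEq n] [RCLike 𝕜]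
    {A : Matrix n n 𝕜} (hA : A.PosSemidef) : Matrix n n 𝕜 :=
  hA.1.eigenvectorUnitary.1 * diagonal ((↑) ∘ Real.sqrt ∘ hA.1.eigenvalues) *
  (star hA.1.eigenvectorUnitary : Matrix n n 𝕜)

/-- A real matrix `H` is centrosymmetric if `hᵢⱼ = h_{n-i, n-j}` for all `i`, `j`. -/
def Centrosymmetric {m n : ℕ} (H : Matrix (Fin m) (Fin n) ℝ) : Prop :=
  ∀ i j, H i j = H i.rev j.rev

open scoped ComplexOrder MatrixOrder in
theorem Matrix.PosSemidef.sqrt_eq_cfcSqrt {n 𝕜 : Type*} [Fintype n] [DecidableEq n] [RCLike 𝕜]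
    {A : Matrix n n 𝕜} (hA : A.PosSemidef) : hA.sqrt = CFC.sqrt A := by
  rw [CFC.sqrt_eq_real_sqrt A hA.nonneg,
    cfcₙ_eq_cfc (hf := Real.continuous_sqrt.continuousOn) (hf0 := Real.sqrt_zero), hA.1.cfc_eq,
    Matrix.IsHermitian.cfc, Unitary.conjStarAlgAut_apply]
  rfl

open scoped ComplexOrder MatrixOrder in
theorem Matrix.PosSemidef.sqrt_submatrix_equiv {m n 𝕜 : Type*} [Fintype m] [DecidableEq m]
    [Fintype n] [DecidableEq n] [RCLike 𝕜] {A : Matrix n n 𝕜} (hA : A.PosSemidef) (e : m ≃ n) :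
    (hA.submatrix e).sqrt = hA.sqrt.submatrix e e := by
  rw [sqrt_eq_cfcSqrt, sqrt_eq_cfcSqrt]
  refine CFC.sqrt_unique ?_ ((CFC.sqrt_nonneg A).posSemidef.submatrix e).nonneg
  rw [submatrix_mul_equiv, CFC.sqrt_mul_sqrt_self A hA.nonneg]

theorem centrosymmetric_iff_submatrix_rev {m n : ℕ} (H : Matrix (Fin m) (Fin n) ℝ) :
    Centrosymmetric H ↔ H.submatrix Fin.rev Fin.rev = H := by
  simp only [Centrosymmetric, ← Matrix.ext_iff, Matrix.submatrix_apply, eq_comm]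

namespace Centrosymmetric

variable {n : ℕ} {H : Matrix (Fin n) (Fin n) ℝ}

theorem inv (hc : Centrosymmetric H) : Centrosymmetric H⁻¹ := by
  rw [centrosymmetric_iff_submatrix_rev] at hc ⊢
  conv_rhs => rw [← hc]
  exact (Matrix.inv_submatrix_equiv H Fin.revPerm Fin.revPerm).symm

theorem sqrt (hc : Centrosymmetric H) (hH : H.PosSemidef) : Centrosymmetric hH.sqrt := by
  rw [centrosymmetric_iff_submatrix_rev] at hc ⊢
  calc hH.sqrt.submatrix Fin.rev Fin.rev = (hH.submatrix Fin.revPerm).sqrt :=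
        (hH.sqrt_submatrix_equiv Fin.revPerm).symm
    _ = hH.sqrt := by congr 1

theorem map_sum_smul {M F : Type*} [AddCommMonoid M] [Module ℝ M] [FunLike F M M]
    [LinearMapClass F ℝ M M] (f : F) {m : ℕ} {A : Matrix (Fin m) (Fin n) ℝ}
    (hA : Centrosymmetric A) {v : Fin n → M} (hv : ∀ k, f (v k) = v k.rev) (k : Fin m) :
    f (∑ j, A k j • v j) = ∑ j, A k.rev j • v j := by
  rw [map_sum]
  refine Fintype.sum_equiv Fin.revPerm _ _ fun j => ?_
  rw [map_smul, hv, hA, Fin.revPerm_apply]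

end Centrosymmetric

theorem orthonormal_vector_reflexive_general (n : ℕ)
    (Q : Fin (n + 1) → MvPolynomial (Fin 2) ℝ)
    (hQ : ∀ k, swapVars (Q k) = Q k.rev)
    (H : Matrix (Fin (n + 1)) (Fin (n + 1)) ℝ)
    (hpd : H.PosDef) (hc : Centrosymmetric H) :
    ∀ k : Fin (n + 1),
      swapVars (∑ j, ((hpd.posSemidef.sqrt)⁻¹) k j • Q j) =
        ∑ j, ((hpd.posSemidef.sqrt)⁻¹) k.rev j • Q j :=
  ((hc.sqrt hpd.posSemidef).inv).map_sum_smul swapVars hQ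

/-- If `Q₀, …, Qₙ` is a reflexive polynomial vector and `H` is a symmetric
centrosymmetric positive definite matrix, then the polynomials
`Pₖ = Σⱼ ((H^(1/2))⁻¹)ₖⱼ Qⱼ` (with `H^(1/2)` the positive semidefinite square root of
`H`) form a reflexive polynomial vector: `σ(Pₖ) = P_{n-k}`. -/
theorem orthonormal_vector_reflexive (n : ℕ)
    (Q : Fin (n + 1) → MvPolynomial (Fin 2) ℝ)
    (hQ : ∀ k, swapVars (Q k) = Q k.rev)
    (H : Matrix (Fin (n + 1)) (Fin (n + 1)) ℝ)
    (hsym : H.IsSymm) (hpd : H.PosDef) (hc : Centrosymmetric H) :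
    ∀ k : Fin (n + 1),
      swapVars (∑ j, ((hpd.posSemidef.sqrt)⁻¹) k j • Q j) =
        ∑ j, ((hpd.posSemidef.sqrt)⁻¹) k.rev j • Q j :=
  orthonormal_vector_reflexive_general n Q hQ H hpd hc
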